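/- arXiv:2605.08848 — 2 statements merged into one kernel-verified Lean document; each statement's English description precedes it below -/
import Mathlib

section
/- Let s ≥ 2 be an integer. Then every K_{s,s}-free graph G is (1/(4s), 2·R(s, ω(G)+1))-sparse. -/
open SimpleGraph

/-- The chromatic number of a graph as a natural number. -/
noncomputable def chromNum {V : Type*} (G : SimpleGraph V) : ℕ :=
  G.chromaticNumber.toNat

/-- The stability (independence) number of a graph. -/
noncomputable def indepNum {V : Type*} (G : SimpleGraph V) : ℕ := Gᶜ.cliqueNum

/-- A stable (independent) set in a graph. -/
def IsStableSet {V : Type*} (G : SimpleGraph V) (S : Finset V) : Prop :=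
  ∀ u ∈ S, ∀ v ∈ S, ¬ G.Adj u v

/-- The Ramsey number `R(s,w)`: the least `n ≥ 1` such that every graph on `n`
vertices contains a stable set of size `s` or a clique of size `w`. -/
noncomputable def ramsey (s w : ℕ) : ℕ :=
  sInf {n : ℕ | 1 ≤ n ∧ ∀ G : SimpleGraph (Fin n),
    (∃ S : Finset (Fin n), IsStableSet G S ∧ S.card = s) ∨
    (∃ S : Finset (Fin n), G.IsNClique w S)}

/-- `G` has no induced subgraph isomorphic to `H`. -/
def IndFree {W V : Type*} (H : SimpleGraph W) (G : SimpleGraph V) : Prop :=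
  ¬ Nonempty (H ↪g G)

/-- The number of ordered pairs `(a,b) ∈ A × B` forming an edge of `G`. -/
noncomputable def eCount {V : Type*} (G : SimpleGraph V) (A B : Finset V) : ℕ :=
  Set.ncard {p : V × V | p.1 ∈ A ∧ p.2 ∈ B ∧ G.Adj p.1 p.2}

/-- A graph is `(c,t)`-sparse if every two vertex subsets of size at least `t`
span at most a `(1-c)` fraction of the possible ordered adjacent pairs. -/
def CTSparse {V : Type*} [Fintype V] (G : SimpleGraph V) (c : ℝ) (t : ℕ) : Prop :=
  ∀ A B : Finset V, t ≤ A.card → t ≤ B.card →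
    (eCount G A B : ℝ) ≤ (1 - c) * A.card * B.card

/-! If `A` and `B` have at least `2R` vertices each, where `R = R(s, ω(G) + 1)`, and span more
than `(1 - 1/(4s))|A||B|` adjacent pairs, then by averaging more than half of `A`, hence at least
`R` vertices, are each non-adjacent to fewer than `|B|/(2s)` vertices of `B`. As `G` has no clique of size
`ω(G) + 1`, any `R` vertices contain a stable set of size `s`; let `S` be one among those vertices
of `A`. The `s` vertices of `S` together miss fewer than `|B|/2` vertices of `B`, so their common
neighbourhood in `B` has at least `R` vertices and contains a stable set `T` of size `s`.
Then `S ∪ T` induces `K_{s,s}`. -/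

open Finset

theorem Finset.card_lt_two_mul_card_filter_of_lt_sum {ι : Type*} (A : Finset ι) (f : ι → ℝ)
    {m δ : ℝ} (hδ : 0 < δ) (hm : 0 ≤ m) (hf : ∀ a ∈ A, f a ≤ m)
    (hsum : (1 - δ / 2) * #A * m < ∑ a ∈ A, f a) :
    (#A : ℝ) < 2 * #{a ∈ A | (1 - δ) * m < f a} := by
  classical
  have hcard : (#{a ∈ A | (1 - δ) * m < f a} : ℝ) + #{a ∈ A | ¬(1 - δ) * m < f a} = #A := by
    exact_mod_cast card_filter_add_card_filter_not _
  have hhigh : ∑ a ∈ A with (1 - δ) * m < f a, f a ≤ #{a ∈ A | (1 - δ) * m < f a} * m :=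
    (sum_le_card_nsmul _ f m fun a ha => hf a (mem_filter.mp ha).1).trans_eq (nsmul_eq_mul _ _)
  have hlow : ∑ a ∈ A with ¬(1 - δ) * m < f a, f a
      ≤ #{a ∈ A | ¬(1 - δ) * m < f a} * ((1 - δ) * m) :=
    (sum_le_card_nsmul _ f _ fun a ha => not_lt.mp (mem_filter.mp ha).2).trans_eq
      (nsmul_eq_mul _ _)
  rw [← sum_filter_add_sum_filter_not A fun a => (1 - δ) * m < f a, ← hcard] at hsum
  by_contra! hle
  nlinarith [mul_nonneg (mul_nonneg hδ.le hm) (by linarith : (0 : ℝ) ≤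
    #{a ∈ A | ¬(1 - δ) * m < f a} - #{a ∈ A | (1 - δ) * m < f a})]

namespace SimpleGraph

variable {V : Type*} (G : SimpleGraph V)

theorem exists_isNClique_compl_or_isNClique_of_choose_le :
    ∀ (s w : ℕ) (U : Finset V), (s + w).choose s ≤ #U →
      (∃ S ⊆ U, Gᶜ.IsNClique s S) ∨ ∃ S ⊆ U, G.IsNClique w S
  | 0, _, _, _ => .inl ⟨∅, empty_subset _, isNClique_empty.mpr rfl⟩
  | _ + 1, 0, _, _ => .inr ⟨∅, empty_subset _, isNClique_empty.mpr rfl⟩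
  | s + 1, w + 1, U, hU => by
    classical
    obtain ⟨v, hv⟩ : U.Nonempty := card_pos.mp <| (Nat.choose_pos (by omega)).trans_le hU
    set N := {u ∈ U.erase v | G.Adj v u}
    set M := {u ∈ U.erase v | ¬G.Adj v u}
    have hNM : #N + #M + 1 = #U := by
      rw [card_filter_add_card_filter_not, card_erase_add_one hv]
    have hpascal :
        (s + 1 + (w + 1)).choose (s + 1) = (s + w + 1).choose s + (s + 1 + w).choose (s + 1) := by
      rw [show s + 1 + (w + 1) = s + w + 1 + 1 by omega, Nat.choose_succ_succ, add_right_comm s 1 w]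
    by_cases hN : (s + 1 + w).choose (s + 1) ≤ #N
    · rcases exists_isNClique_compl_or_isNClique_of_choose_le (s + 1) w N hN with
        ⟨S, hSN, hS⟩ | ⟨S, hSN, hS⟩
      · exact .inl ⟨S, hSN.trans (filter_subset _ _ |>.trans (erase_subset _ _)), hS⟩
      refine .inr ⟨insert v S, insert_subset hv ?_, hS.insert fun b hb => ?_⟩
      · exact hSN.trans (filter_subset _ _ |>.trans (erase_subset _ _))
      · exact (mem_filter.mp (hSN hb)).2
    · have hM : (s + (w + 1)).choose s ≤ #M := by
        rw [show s + (w + 1) = s + w + 1 by omega]; omega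
      rcases exists_isNClique_compl_or_isNClique_of_choose_le s (w + 1) M hM with
        ⟨S, hSM, hS⟩ | ⟨S, hSM, hS⟩
      · refine .inl ⟨insert v S, insert_subset hv ?_, hS.insert fun b hb => ?_⟩
        · exact hSM.trans (filter_subset _ _ |>.trans (erase_subset _ _))
        · obtain ⟨hbv, hvb⟩ := mem_filter.mp (hSM hb)
          exact ⟨(ne_of_mem_erase hbv).symm, hvb⟩
      · exact .inr ⟨S, hSM.trans (filter_subset _ _ |>.trans (erase_subset _ _)), hS⟩

theorem isStableSet_iff_isClique_compl {S : Finset V} :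
    IsStableSet G S ↔ Gᶜ.IsClique (S : Set V) := by
  refine ⟨fun hS x hx y hy hxy => ⟨hxy, hS x hx y hy⟩, fun hS x hx y hy hxy => ?_⟩
  obtain rfl | hne := eq_or_ne x y
  · exact G.loopless.irrefl x hxy
  · exact (hS hx hy hne).2 hxy

theorem ramsey_spec (s w : ℕ) (H : SimpleGraph (Fin (ramsey s w))) :
    (∃ S, IsStableSet H S ∧ #S = s) ∨ ∃ S, H.IsNClique w S := by
  have hne : {n : ℕ | 1 ≤ n ∧ ∀ H : SimpleGraph (Fin n),
      (∃ S, IsStableSet H S ∧ #S = s) ∨ ∃ S, H.IsNClique w S}.Nonempty := by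
    refine ⟨(s + w).choose s, Nat.choose_pos (by omega), fun H => ?_⟩
    rcases H.exists_isNClique_compl_or_isNClique_of_choose_le s w univ (by simp) with
      ⟨S, -, hS⟩ | ⟨S, -, hS⟩
    · exact .inl ⟨S, (isStableSet_iff_isClique_compl H).mpr hS.isClique, hS.card_eq⟩
    · exact .inr ⟨S, hS⟩
  exact (Nat.sInf_mem hne).2 H

theorem exists_isStableSet_or_isNClique_of_ramsey_le {s w : ℕ} {U : Finset V}
    (h : ramsey s w ≤ #U) :
    (∃ S ⊆ U, IsStableSet G S ∧ #S = s) ∨ ∃ S ⊆ U, G.IsNClique w S := by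
  let f : Fin (ramsey s w) ↪ V :=
    (Fin.castLEEmb h).trans (U.equivFin.symm.toEmbedding.trans (Function.Embedding.subtype _))
  have hfU : ∀ S : Finset (Fin (ramsey s w)), S.map f ⊆ U := by
    intro S x hx
    obtain ⟨i, -, rfl⟩ := mem_map.mp hx
    exact (U.equivFin.symm _).2
  rcases ramsey_spec s w (G.comap f) with ⟨S, hS, hSs⟩ | ⟨S, hS⟩
  · refine .inl ⟨S.map f, hfU S, ?_, by rw [card_map, hSs]⟩
    intro x hx y hy
    obtain ⟨i, hi, rfl⟩ := mem_map.mp hx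
    obtain ⟨j, hj, rfl⟩ := mem_map.mp hy
    exact hS i hi j hj
  · exact .inr ⟨S.map f, hfU S, hS.map.mono (map_comap_le f G)⟩

theorem exists_isStableSet_of_ramsey_cliqueNum_le [Finite V] {s : ℕ} {U : Finset V}
    (h : ramsey s (G.cliqueNum + 1) ≤ #U) : ∃ S ⊆ U, IsStableSet G S ∧ #S = s := by
  refine (G.exists_isStableSet_or_isNClique_of_ramsey_le h).resolve_right ?_
  rintro ⟨S, -, hS⟩
  have := hS.isClique.card_le_cliqueNum
  have := hS.card_eq
  omega

theorem eCount_eq_sum [DecidableRel G.Adj] (A B : Finset V) :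
    eCount G A B = ∑ a ∈ A, #{b ∈ B | G.Adj a b} := by
  classical
  have : {p : V × V | p.1 ∈ A ∧ p.2 ∈ B ∧ G.Adj p.1 p.2} = ↑{p ∈ A ×ˢ B | G.Adj p.1 p.2} := by
    ext p
    simp [and_assoc]
  rw [eCount, this, Set.ncard_coe_finset, card_filter, sum_product]
  exact sum_congr rfl fun a _ => (card_filter _ _).symm

theorem card_le_card_filter_forall_adj_add_sum [DecidableRel G.Adj] (S B : Finset V) :
    #B ≤ #{b ∈ B | ∀ a ∈ S, G.Adj a b} + ∑ a ∈ S, #{b ∈ B | ¬G.Adj a b} := by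
  classical
  rw [← card_filter_add_card_filter_not (s := B) (fun b => ∀ a ∈ S, G.Adj a b)]
  gcongr
  calc #{b ∈ B | ¬∀ a ∈ S, G.Adj a b}
      ≤ #(S.biUnion fun a => {b ∈ B | ¬G.Adj a b}) := card_le_card fun b hb => by
        obtain ⟨hbB, hb⟩ := mem_filter.mp hb
        obtain ⟨a, ha, hab⟩ := not_forall₂.mp hb
        exact mem_biUnion.mpr ⟨a, ha, mem_filter.mpr ⟨hbB, hab⟩⟩
    _ ≤ ∑ a ∈ S, #{b ∈ B | ¬G.Adj a b} := card_biUnion_le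

theorem card_le_two_mul_card_filter_forall_adj [DecidableRel G.Adj] (S B : Finset V)
    (hS : ∀ a ∈ S, (1 - 1 / (2 * #S)) * #B ≤ (#{b ∈ B | G.Adj a b} : ℝ)) :
    #B ≤ 2 * #{b ∈ B | ∀ a ∈ S, G.Adj a b} := by
  have hmiss : ∀ a ∈ S, (#{b ∈ B | ¬G.Adj a b} : ℝ) ≤ #B / (2 * #S) := by
    intro a ha
    have hsplit : (#{b ∈ B | G.Adj a b} : ℝ) + #{b ∈ B | ¬G.Adj a b} = #B := by
      exact_mod_cast card_filter_add_card_filter_not _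
    have := hS a ha
    rw [div_eq_mul_one_div]
    linarith
  have hsum : ∑ a ∈ S, (#{b ∈ B | ¬G.Adj a b} : ℝ) ≤ #B / 2 := by
    calc ∑ a ∈ S, (#{b ∈ B | ¬G.Adj a b} : ℝ)
        ≤ #S * (#B / (2 * #S)) := by simpa using sum_le_sum hmiss
      _ ≤ #B / 2 := by
        obtain hS0 | hS0 := eq_or_ne (#S : ℝ) 0
        · simp only [hS0, zero_mul]; positivity
        · rw [mul_div_assoc', mul_comm 2, ← div_div, mul_div_cancel_left₀ _ hS0]
  have := G.card_le_card_filter_forall_adj_add_sum S B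
  have : (#B : ℝ) ≤ 2 * #{b ∈ B | ∀ a ∈ S, G.Adj a b} := by
    push_cast [← Nat.cast_le (α := ℝ)] at this
    linarith
  exact_mod_cast this

theorem nonempty_completeBipartiteGraph_embedding {S T : Finset V} (hS : IsStableSet G S)
    (hT : IsStableSet G T) (hST : ∀ x ∈ S, ∀ y ∈ T, G.Adj x y) :
    Nonempty (completeBipartiteGraph S T ↪g G) := by
  have hdisj : ∀ x ∈ S, x ∉ T := fun x hxS hxT => G.loopless.irrefl x (hST x hxS x hxT)
  refine ⟨⟨⟨Sum.elim Subtype.val Subtype.val, ?_⟩, @fun x y => ?_⟩⟩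
  · rintro (x | x) (y | y) hxy <;> simp only [Sum.elim_inl, Sum.elim_inr] at hxy
    · exact congrArg _ (Subtype.ext hxy)
    · exact (hdisj _ x.2 (hxy ▸ y.2)).elim
    · exact (hdisj _ y.2 (hxy ▸ x.2)).elim
    · exact congrArg _ (Subtype.ext hxy)
  · rcases x with x | x <;> rcases y with y | y <;>
      simp only [completeBipartiteGraph_adj, Sum.isLeft_inl, Sum.isLeft_inr, Sum.isRight_inl,
        Sum.isRight_inr, Bool.false_eq_true, and_self, and_true, and_false, or_self, or_false,
        or_true, iff_true, iff_false]
    · exact hS _ x.2 _ y.2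
    · exact hST _ x.2 _ y.2
    · exact (hST _ y.2 _ x.2).symm
    · exact hT _ x.2 _ y.2

theorem not_indFree_completeBipartiteGraph {S T : Finset V} {m n : ℕ} (hS : IsStableSet G S)
    (hT : IsStableSet G T) (hSm : #S = m) (hTn : #T = n) (hST : ∀ x ∈ S, ∀ y ∈ T, G.Adj x y) :
    ¬IndFree (completeBipartiteGraph (Fin m) (Fin n)) G := by
  obtain ⟨e⟩ := G.nonempty_completeBipartiteGraph_embedding hS hT hST
  let eS : Fin m ≃ S := (S.equivFinOfCardEq hSm).symm
  let eT : Fin n ≃ T := (T.equivFinOfCardEq hTn).symm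
  exact not_not.mpr ⟨(completeBipartiteGraphCongr eS eT).toEmbedding.trans e⟩

end SimpleGraph

/-- for every integer `s ≥ 2`, every `K_{s,s}`-free graph `G` is
`(1/(4s), 2·R(s, ω(G)+1))`-sparse. -/
theorem stmt7 (s : ℕ) (hs : 2 ≤ s) (V : Type) [Fintype V] (G : SimpleGraph V)
    (hfree : IndFree (completeBipartiteGraph (Fin s) (Fin s)) G) :
    CTSparse G (1 / (4 * (s : ℝ))) (2 * ramsey s (G.cliqueNum + 1)) := by
  classical
  intro A B hA hB
  by_contra! hdense
  have hsum : (1 - 1 / (2 * s) / 2) * #A * #B < ∑ a ∈ A, (#{b ∈ B | G.Adj a b} : ℝ) := by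
    rw [show (1 : ℝ) / (2 * s) / 2 = 1 / (4 * s) by ring]
    simpa [G.eCount_eq_sum] using hdense
  have hA' : #A < 2 * #{a ∈ A | (1 - 1 / (2 * (s : ℝ))) * #B < #{b ∈ B | G.Adj a b}} := by
    exact_mod_cast card_lt_two_mul_card_filter_of_lt_sum A _ (by positivity) (by positivity)
      (fun a _ => by exact_mod_cast card_filter_le B (G.Adj a)) hsum
  obtain ⟨S, hSA', hS, hSs⟩ := G.exists_isStableSet_of_ramsey_cliqueNum_le (s := s)
    (Nat.le_of_mul_le_mul_left (hA.trans hA'.le) two_pos)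
  have hC := G.card_le_two_mul_card_filter_forall_adj S B fun a ha => by
    rw [hSs]
    exact (mem_filter.mp (hSA' ha)).2.le
  obtain ⟨T, hTC, hT, hTs⟩ := G.exists_isStableSet_of_ramsey_cliqueNum_le (s := s)
    (Nat.le_of_mul_le_mul_left (hB.trans hC) two_pos)
  refine G.not_indFree_completeBipartiteGraph hS hT hSs hTs (fun x hx y hy => ?_) hfree
  have hyC := hTC hy
  simp only [mem_filter] at hyC
  exact hyC.2 x hx
end

section
/- Let c ∈ (0, 1/2) be real and let h ≥ 0 and t ≥ 1 be integers. Let (T,r) be a ((4/c)^h · t, h)-wide rooted tree, let G be a (c,t)-sparse graph, and let φ be a skeleton from (T,r) to G. Let X ⊆ V(G) \ (φ(V(T)) ∪ N_G(φ(r))) with |X| ≥ (4/c)^h · t. Then there exists Y ⊆ X with |Y| ≥ (c/4)^h · |X| such that every vertex of Y is 2(c/4)^(h+1)-good for φ. -/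
/-!
Induction on the number `k` of levels below a vertex `u`. The images of the children of `u` are
distinct, so by sparsity a typical child `w` is non-adjacent to a `c`-fraction of `X`; the
children whose non-neighbourhood `X_w ⊆ X` has at least `(4/c)^k t` vertices still carry half
of this mass, and induction gives `Y_w ⊆ X_w` of vertices good below `w`. Double counting the
`Y_w`, a `(c/4)^(k+1)`-fraction of `X` lies in `Y_w` for a `(c/4)^(k+1)`-fraction of the
children `w`; for such `v`, joining `u` to the subtrees witnessing goodness below those
children gives the required subtree hanging from `u`.
-/

open SimpleGraph

/-- `v` is a child of `u` in the tree `T` rooted at `r`. -/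
def IsChild {V : Type*} (T : SimpleGraph V) (r u v : V) : Prop :=
  T.Adj u v ∧ T.dist r v = T.dist r u + 1

/-- The depth of the tree `T` rooted at `r`: the maximum height of a vertex. -/
noncomputable def rootDepth {V : Type*} (T : SimpleGraph V) (r : V) : ℕ :=
  sSup (Set.range (T.dist r))

/-- The rooted tree `(T,r)` is `(d,h)`-wide: its depth is `h` and every vertex
of height less than `h` has at least `d` children. -/
def IsWide {V : Type*} (T : SimpleGraph V) (r : V) (d : ℝ) (h : ℕ) : Prop :=
  rootDepth T r = h ∧
  ∀ u : V, T.dist r u < h → d ≤ (Set.ncard {v : V | IsChild T r u v} : ℝ)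

/-- A leaf of the rooted tree `(T,r)`: a non-root vertex with no children. -/
def IsTreeLeaf {V : Type*} (T : SimpleGraph V) (r l : V) : Prop :=
  l ≠ r ∧ ∀ v : V, ¬ IsChild T r l v

/-- `x` lies on the (unique) path from `r` to `l` in the tree `T`. -/
def OnRootPath {V : Type*} (T : SimpleGraph V) (r l x : V) : Prop :=
  T.dist r x + T.dist x l = T.dist r l

/-- A skeleton from the rooted tree `(T,r)` to `G`: a locally injective
homomorphism mapping every root-to-leaf path of `(T,r)` onto an induced path
of `G`. -/
def IsSkeleton {V W : Type*} (T : SimpleGraph V) (r : V) (G : SimpleGraph W)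
    (φ : T →g G) : Prop :=
  (∀ v : V, Set.InjOn φ (T.neighborSet v)) ∧
  ∀ l : V, IsTreeLeaf T r l →
    Set.InjOn φ {x : V | OnRootPath T r l x} ∧
    ∀ x y : V, OnRootPath T r l x → OnRootPath T r l y →
      (G.Adj (φ x) (φ y) ↔ T.Adj x y)

/-- `G` contains a `(d,h)`-skeleton: a skeleton from some `(d,h)`-wide finite
rooted tree to `G`. -/
def HasSkeleton {W : Type*} (G : SimpleGraph W) (d : ℝ) (h : ℕ) : Prop :=
  ∃ (V : Type) (_ : Fintype V) (T : SimpleGraph V) (r : V),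
    T.IsTree ∧ IsWide T r d h ∧ ∃ φ : T →g G, IsSkeleton T r G φ

/-- An `ε`-subtree of `(T,r)`, given by its vertex set `S`: a rooted subtree
with the same root in which every vertex retains at least an `ε` fraction of
its children. -/
def IsEpsSubtree {V : Type*} (T : SimpleGraph V) (r : V) (ε : ℝ) (S : Set V) : Prop :=
  r ∈ S ∧ (T.induce S).Connected ∧
  ∀ u ∈ S, ε * (Set.ncard {v : V | IsChild T r u v} : ℝ) ≤
    (Set.ncard {v : V | v ∈ S ∧ IsChild T r u v} : ℝ)

/-- A vertex `v ∉ φ(V(T))` is `ε`-good for the skeleton `φ` if some `ε`-subtree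
of `(T,r)` has image avoiding the closed neighbourhood of `v`. -/
def EpsGood {V W : Type*} (T : SimpleGraph V) (r : V) (G : SimpleGraph W)
    (φ : T →g G) (ε : ℝ) (v : W) : Prop :=
  v ∉ Set.range φ ∧
  ∃ S : Set V, IsEpsSubtree T r ε S ∧ ∀ x ∈ S, φ x ≠ v ∧ ¬ G.Adj v (φ x)

open Finset

section Counting

variable {ι α : Type*}

theorem sum_le_sum_filter_le_add_card_mul (s : Finset ι) (f : ι → ℝ) {θ : ℝ} (hθ : 0 ≤ θ) :
    ∑ i ∈ s, f i ≤ ∑ i ∈ s with θ ≤ f i, f i + #s * θ := by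
  rw [← sum_filter_add_sum_filter_not s (fun i => θ ≤ f i)]
  gcongr
  calc ∑ i ∈ s with ¬θ ≤ f i, f i
      ≤ ∑ i ∈ s with ¬θ ≤ f i, θ := sum_le_sum fun i hi => (not_le.1 (mem_filter.1 hi).2).le
    _ = #{i ∈ s | ¬θ ≤ f i} * θ := by rw [sum_const, nsmul_eq_mul]
    _ ≤ #s * θ := by gcongr; exact filter_subset _ _

theorem mul_card_le_card_filter_of_le_sum_card [DecidableEq α] (X : Finset α) (D : Finset ι)
    (Y : ι → Finset α) (hY : ∀ i ∈ D, Y i ⊆ X) {a m : ℝ} (ha : 0 ≤ a) (hm : 0 < m)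
    (hD : #D ≤ m) (hsum : 2 * a * m * #X ≤ ∑ i ∈ D, (#(Y i) : ℝ)) :
    a * #X ≤ #{v ∈ X | a * m ≤ #{i ∈ D | v ∈ Y i}} := by
  have hswap : ∑ i ∈ D, #(Y i) = ∑ v ∈ X, #{i ∈ D | v ∈ Y i} := by
    calc ∑ i ∈ D, #(Y i) = ∑ i ∈ D, #(X.bipartiteAbove (fun i v => v ∈ Y i) i) :=
          sum_congr rfl fun i hi => by
            rw [bipartiteAbove, filter_mem_eq_inter, inter_eq_right.2 (hY i hi)]
      _ = _ := sum_card_bipartiteAbove_eq_sum_card_bipartiteBelow _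
  have hpopular : ∑ v ∈ X with a * m ≤ #{i ∈ D | v ∈ Y i}, (#{i ∈ D | v ∈ Y i} : ℝ)
      ≤ #{v ∈ X | a * m ≤ #{i ∈ D | v ∈ Y i}} * m := by
    rw [← nsmul_eq_mul, ← sum_const]
    exact sum_le_sum fun v _ => (Nat.cast_le.2 (card_filter_le _ _)).trans hD
  have := sum_le_sum_filter_le_add_card_mul X (fun v => (#{i ∈ D | v ∈ Y i} : ℝ))
    (mul_nonneg ha hm.le)
  rw [← Nat.cast_sum, ← hswap, Nat.cast_sum] at this
  nlinarith

theorem le_four_div_pow_mul {c x : ℝ} (hc0 : 0 < c) (hc4 : c ≤ 4) (hx : 0 ≤ x) (k : ℕ) :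
    x ≤ (4 / c) ^ k * x :=
  le_mul_of_one_le_left hx (one_le_pow₀ (by rw [le_div_iff₀ hc0]; linarith))

end Counting

section Sparse

variable {W : Type*} {G : SimpleGraph W} [DecidableRel G.Adj]

theorem eCount_eq_sum_card_filter_adj (A B : Finset W) :
    eCount G A B = ∑ a ∈ A, #{b ∈ B | G.Adj a b} := by
  have hpairs : {p : W × W | p.1 ∈ A ∧ p.2 ∈ B ∧ G.Adj p.1 p.2} =
      ↑{p ∈ A ×ˢ B | G.Adj p.1 p.2} := by
    ext p
    simp [and_assoc]
  rw [eCount, hpairs, Set.ncard_coe_finset, card_filter, sum_product]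
  simp only [card_filter]

theorem CTSparse.mul_card_le_sum_card_filter_not_adj [Fintype W] {c : ℝ} {t : ℕ}
    (hG : CTSparse G c t) {A B : Finset W} (hA : t ≤ #A) (hB : t ≤ #B) :
    c * #A * #B ≤ ∑ a ∈ A, (#{b ∈ B | ¬G.Adj a b} : ℝ) := by
  have hsplit : ∑ a ∈ A, (#{b ∈ B | G.Adj a b} : ℝ) + ∑ a ∈ A, (#{b ∈ B | ¬G.Adj a b} : ℝ) =
      #A * #B := by
    rw [← sum_add_distrib]
    simp_rw [← Nat.cast_add, card_filter_add_card_filter_not]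
    simp
  have := hG A B hA hB
  rw [eCount_eq_sum_card_filter_adj, Nat.cast_sum] at this
  linarith

theorem CTSparse.mul_card_le_sum_card_filter_not_adj_of_injOn [Fintype W] {ι : Type*} {c : ℝ}
    {t : ℕ} (hG : CTSparse G c t) {f : ι → W} {A : Finset ι} (hf : Set.InjOn f A)
    {B : Finset W} (hA : t ≤ #A) (hB : t ≤ #B) :
    c * #A * #B ≤ ∑ i ∈ A, (#{b ∈ B | ¬G.Adj (f i) b} : ℝ) := by
  classical
  have := hG.mul_card_le_sum_card_filter_not_adj (A := A.image f) (by rwa [card_image_of_injOn hf]) hB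
  rwa [card_image_of_injOn hf, sum_image hf] at this

theorem CTSparse.half_mul_le_sum_card_filter_not_adj_of_le_card [Fintype W] {ι : Type*} {c : ℝ}
    {t k : ℕ} (hG : CTSparse G c t) (hc0 : 0 < c) (hc4 : c ≤ 4) {f : ι → W} {A : Finset ι}
    (hf : Set.InjOn f A) {X : Finset W} (hA : t ≤ #A) (hX : (4 / c) ^ (k + 1) * t ≤ #X) :
    c / 2 * #A * #X ≤ ∑ i ∈ A with (4 / c) ^ k * t ≤ #{x ∈ X | ¬G.Adj (f i) x},
      (#{x ∈ X | ¬G.Adj (f i) x} : ℝ) := by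
  have htX : t ≤ #X :=
    mod_cast (le_four_div_pow_mul hc0 hc4 (Nat.cast_nonneg t) (k + 1)).trans hX
  have hθ : (4 / c) ^ k * t ≤ c / 4 * #X := by
    rw [pow_succ, mul_right_comm] at hX
    calc (4 / c) ^ k * t = c / 4 * ((4 / c) ^ k * t * (4 / c)) := by field_simp
      _ ≤ c / 4 * #X := by gcongr
  have hsparse := hG.mul_card_le_sum_card_filter_not_adj_of_injOn hf hA htX
  have hsplit := sum_le_sum_filter_le_add_card_mul A (fun i => (#{x ∈ X | ¬G.Adj (f i) x} : ℝ))
    (θ := (4 / c) ^ k * t) (by positivity)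
  nlinarith [mul_le_mul_of_nonneg_left hθ (Nat.cast_nonneg (α := ℝ) #A),
    mul_nonneg (mul_nonneg hc0.le (Nat.cast_nonneg (α := ℝ) #A)) (Nat.cast_nonneg (α := ℝ) #X)]

end Sparse

section Subtree

variable {V W : Type*} {T : SimpleGraph V} {G : SimpleGraph W} {r u : V} {ε : ℝ}

/-- `IsEpsSubtreeAt T r r` is `IsEpsSubtree T r`. -/
def IsEpsSubtreeAt (T : SimpleGraph V) (r u : V) (ε : ℝ) (S : Set V) : Prop :=
  u ∈ S ∧ (T.induce S).Connected ∧
  ∀ x ∈ S, ε * (Set.ncard {y : V | IsChild T r x y} : ℝ) ≤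
    (Set.ncard {y : V | y ∈ S ∧ IsChild T r x y} : ℝ)

theorem IsEpsSubtreeAt.mono {ε' : ℝ} {S : Set V} (hS : IsEpsSubtreeAt T r u ε S)
    (hε : ε' ≤ ε) : IsEpsSubtreeAt T r u ε' S :=
  ⟨hS.1, hS.2.1, fun x hx => (mul_le_mul_of_nonneg_right hε (Nat.cast_nonneg _)).trans
    (hS.2.2 x hx)⟩

theorem connected_induce_singleton (u : V) : (T.induce {u}).Connected := by
  rw [induce_singleton_eq_top]
  exact connected_top

theorem isEpsSubtreeAt_singleton (hu : ∀ y, ¬IsChild T r u y) :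
    IsEpsSubtreeAt T r u ε {u} := by
  refine ⟨rfl, connected_induce_singleton u, fun x hx => ?_⟩
  rw [Set.mem_singleton_iff.1 hx]
  simp [hu]

theorem IsEpsSubtreeAt.insert_biUnion [Finite V] {D : Finset V} {S : V → Set V}
    (hD : ∀ w ∈ D, IsChild T r u w)
    (hcard : ε * (Set.ncard {y : V | IsChild T r u y} : ℝ) ≤ #D)
    (hS : ∀ w ∈ D, IsEpsSubtreeAt T r w ε (S w)) :
    IsEpsSubtreeAt T r u ε (insert u (⋃ w ∈ D, S w)) := by
  have hsub : ∀ w ∈ D, S w ⊆ insert u (⋃ w ∈ D, S w) := fun w hw =>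
    (Set.subset_biUnion_of_mem (u := S) hw).trans (Set.subset_insert _ _)
  refine ⟨Set.mem_insert _ _, ?_, fun x hx => ?_⟩
  · refine induce_connected_of_patches u (Set.mem_insert _ _) fun {x} hx => ?_
    rcases Set.mem_insert_iff.1 hx with rfl | hx
    · exact ⟨{x}, by simp, rfl, rfl, .rfl⟩
    obtain ⟨w, hw, hxw⟩ := Set.mem_iUnion₂.1 hx
    have hconn : (T.induce ({u} ∪ S w)).Connected :=
      connected_induce_union (connected_induce_singleton u).preconnected
        (hS w hw).2.1.preconnected rfl (hS w hw).1 (hD w hw).1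
    exact ⟨{u} ∪ S w, Set.union_subset (by simp) (hsub w hw), .inl rfl, .inr hxw,
      hconn.preconnected _ _⟩
  rcases Set.mem_insert_iff.1 hx with rfl | hx
  · have hDsub : (D : Set V) ⊆ {y | y ∈ insert x (⋃ w ∈ D, S w) ∧ IsChild T r x y} :=
      fun w hw => ⟨Set.mem_insert_of_mem _ (Set.mem_biUnion hw (hS w hw).1), hD w hw⟩
    exact hcard.trans (mod_cast (Set.ncard_coe_finset D).symm.le.trans (Set.ncard_le_ncard hDsub))
  · obtain ⟨w, hw, hxw⟩ := Set.mem_iUnion₂.1 hx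
    have hchildren : {y | y ∈ S w ∧ IsChild T r x y} ⊆
        {y | y ∈ insert u (⋃ w ∈ D, S w) ∧ IsChild T r x y} := fun y hy => ⟨hsub w hw hy.1, hy.2⟩
    exact ((hS w hw).2.2 x hxw).trans (mod_cast Set.ncard_le_ncard hchildren)

end Subtree

section Good

variable {V W : Type*} {T : SimpleGraph V} {G : SimpleGraph W} {r u : V} {φ : T →g G}
  {ε : ℝ} {v : W}

/-- `EpsGood T r G φ ε v` is `v ∉ Set.range φ ∧ EpsGoodAt r φ ε r v`. -/
def EpsGoodAt (r : V) (φ : T →g G) (ε : ℝ) (u : V) (v : W) : Prop :=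
  ∃ S : Set V, IsEpsSubtreeAt T r u ε S ∧ ∀ x ∈ S, φ x ≠ v ∧ ¬G.Adj v (φ x)

theorem ne_and_not_adj_of_subset_compl {X : Set W}
    (hX : X ⊆ (Set.range φ ∪ G.neighborSet (φ u))ᶜ) (hv : v ∈ X) :
    φ u ≠ v ∧ ¬G.Adj v (φ u) := by
  have := hX hv
  simp only [Set.mem_compl_iff, Set.mem_union, Set.mem_range, mem_neighborSet, not_or] at this
  exact ⟨fun h => this.1 ⟨u, h⟩, fun h => this.2 h.symm⟩

theorem EpsGoodAt.mono {ε' : ℝ} (hv : EpsGoodAt r φ ε u v) (hε : ε' ≤ ε) :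
    EpsGoodAt r φ ε' u v :=
  let ⟨S, hS, hSv⟩ := hv
  ⟨S, hS.mono hε, hSv⟩

theorem epsGoodAt_singleton (hu : ∀ y, ¬IsChild T r u y) (hv : φ u ≠ v ∧ ¬G.Adj v (φ u)) :
    EpsGoodAt r φ ε u v :=
  ⟨{u}, isEpsSubtreeAt_singleton hu, fun _ hx => Set.mem_singleton_iff.1 hx ▸ hv⟩

theorem epsGoodAt_of_children [Finite V] (D : Finset V) (hD : ∀ w ∈ D, IsChild T r u w)
    (hcard : ε * (Set.ncard {y : V | IsChild T r u y} : ℝ) ≤ #D)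
    (hv : φ u ≠ v ∧ ¬G.Adj v (φ u)) (hgood : ∀ w ∈ D, EpsGoodAt r φ ε w v) :
    EpsGoodAt r φ ε u v := by
  choose! S hS hSv using hgood
  refine ⟨insert u (⋃ w ∈ D, S w), IsEpsSubtreeAt.insert_biUnion hD hcard hS, fun x hx => ?_⟩
  rcases Set.mem_insert_iff.1 hx with rfl | hx
  · exact hv
  · obtain ⟨w, hw, hxw⟩ := Set.mem_iUnion₂.1 hx
    exact hSv w hw x hxw

end Good

section Induction

variable {V W : Type*} [Fintype V] [Fintype W] {T : SimpleGraph V} {G : SimpleGraph W} {r u : V}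
  {φ : T →g G} {c : ℝ} {t : ℕ}

theorem exists_large_epsGoodAt_succ (hc0 : 0 < c) (hc2 : c ≤ 2) (ht : 1 ≤ t)
    (hG : CTSparse G c t) (hφ : Set.InjOn φ (T.neighborSet u))
    (hu : t ≤ Set.ncard {w : V | IsChild T r u w}) {k : ℕ}
    (ih : ∀ w, IsChild T r u w → ∀ X : Finset W, ↑X ⊆ (Set.range φ ∪ G.neighborSet (φ w))ᶜ →
      (4 / c) ^ k * t ≤ #X →
      ∃ Y ⊆ X, (c / 4) ^ k * #X ≤ #Y ∧ ∀ v ∈ Y, EpsGoodAt r φ (2 * (c / 4) ^ (k + 1)) w v)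
    (X : Finset W) (hX : ↑X ⊆ (Set.range φ ∪ G.neighborSet (φ u))ᶜ)
    (hXcard : (4 / c) ^ (k + 1) * t ≤ #X) :
    ∃ Y ⊆ X, (c / 4) ^ (k + 1) * #X ≤ #Y ∧
      ∀ v ∈ Y, EpsGoodAt r φ (2 * (c / 4) ^ (k + 2)) u v := by
  classical
  set C : Finset V := {w : V | IsChild T r u w}.toFinset
  have hC : Set.ncard {w : V | IsChild T r u w} = #C := Set.ncard_eq_toFinset_card' _
  have hCchild : ∀ w ∈ C, IsChild T r u w := fun w hw => by simpa [C] using hw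
  have hc4pos : 0 < c / 4 := by positivity
  have hCpos : (0 : ℝ) < #C := by rw [← hC]; exact_mod_cast ht.trans hu
  let Xw (w : V) : Finset W := {v ∈ X | ¬G.Adj (φ w) v}
  set D : Finset V := {w ∈ C | (4 / c) ^ k * t ≤ #(Xw w)}
  have hheavy : c / 2 * #C * #X ≤ ∑ w ∈ D, (#(Xw w) : ℝ) :=
    hG.half_mul_le_sum_card_filter_not_adj_of_le_card hc0 (by linarith)
      (hφ.mono fun w hw => (hCchild w hw).1) (hC ▸ hu) hXcard
  have hXw : ∀ w, ↑(Xw w) ⊆ (Set.range φ ∪ G.neighborSet (φ w))ᶜ := fun w v hv => by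
    obtain ⟨hvX, hvw⟩ := mem_filter.1 hv
    exact fun hv' => hv'.elim (fun hvφ => hX hvX (.inl hvφ)) hvw
  choose! Y hYX hYcard hYgood using fun w (hw : w ∈ D) =>
    ih w (hCchild w (mem_filter.1 hw).1) (Xw w) (hXw w) (mem_filter.1 hw).2
  have hYsum : 2 * (c / 4) ^ (k + 1) * #C * #X ≤ ∑ w ∈ D, (#(Y w) : ℝ) :=
    calc 2 * (c / 4) ^ (k + 1) * #C * #X = (c / 4) ^ k * (c / 2 * #C * #X) := by ring
      _ ≤ (c / 4) ^ k * ∑ w ∈ D, (#(Xw w) : ℝ) := by gcongr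
      _ = ∑ w ∈ D, (c / 4) ^ k * #(Xw w) := mul_sum _ _ _
      _ ≤ ∑ w ∈ D, (#(Y w) : ℝ) := sum_le_sum hYcard
  refine ⟨{v ∈ X | (c / 4) ^ (k + 1) * #C ≤ #{w ∈ D | v ∈ Y w}}, filter_subset _ _,
    mul_card_le_card_filter_of_le_sum_card X D Y
      (fun w hw => (hYX w hw).trans (filter_subset _ _)) (by positivity) hCpos
      (mod_cast card_le_card (filter_subset _ _)) hYsum, fun v hv => ?_⟩
  obtain ⟨hvX, hvpopular⟩ := mem_filter.1 hv
  refine epsGoodAt_of_children {w ∈ D | v ∈ Y w}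
    (fun w hw => hCchild w (mem_filter.1 (mem_filter.1 hw).1).1) ?_
    (ne_and_not_adj_of_subset_compl hX hvX)
    (fun w hw => (hYgood w (mem_filter.1 hw).1 v (mem_filter.1 hw).2).mono ?_)
  · rw [hC]
    refine le_trans ?_ hvpopular
    rw [pow_succ _ (k + 1)]
    nlinarith [mul_nonneg (mul_nonneg (pow_pos hc4pos (k + 1)).le hCpos.le)
      (by linarith : (0 : ℝ) ≤ 1 - c / 2)]
  · gcongr 2 * ?_
    exact pow_le_pow_of_le_one hc4pos.le (by linarith) (by omega)

theorem exists_large_epsGoodAt (hc0 : 0 < c) (hc2 : c ≤ 2) (ht : 1 ≤ t) (hG : CTSparse G c t)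
    (hφ : ∀ x, Set.InjOn φ (T.neighborSet x)) {h : ℕ}
    (hchildren : ∀ x, T.dist r x < h → t ≤ Set.ncard {y : V | IsChild T r x y})
    (hdepth : ∀ x, T.dist r x ≤ h) (k : ℕ) (u : V) (hu : T.dist r u + k = h)
    (X : Finset W) (hX : ↑X ⊆ (Set.range φ ∪ G.neighborSet (φ u))ᶜ)
    (hXcard : (4 / c) ^ k * t ≤ #X) :
    ∃ Y ⊆ X, (c / 4) ^ k * #X ≤ #Y ∧ ∀ v ∈ Y, EpsGoodAt r φ (2 * (c / 4) ^ (k + 1)) u v := by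
  induction k generalizing u X with
  | zero =>
    refine ⟨X, subset_rfl, by simp, fun v hv => epsGoodAt_singleton (fun y hy => ?_)
      (ne_and_not_adj_of_subset_compl hX hv)⟩
    have := hdepth y
    have := hy.2
    omega
  | succ k ih =>
    exact exists_large_epsGoodAt_succ hc0 hc2 ht hG (hφ u) (hchildren u (by omega))
      (fun w hw => ih w (by rw [hw.2]; omega)) X hX hXcard

end Induction

theorem IsWide.dist_le {V : Type*} [Finite V] {T : SimpleGraph V} {r : V} {d : ℝ} {h : ℕ}
    (hw : IsWide T r d h) (x : V) : T.dist r x ≤ h :=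
  hw.1 ▸ le_csSup (Set.finite_range _).bddAbove (Set.mem_range_self x)

theorem stmt12_general (c : ℝ) (hc0 : 0 < c) (hc2 : c < 1 / 2) (h t : ℕ) (ht : 1 ≤ t)
    (V : Type) [Fintype V] (T : SimpleGraph V) (r : V)
    (hwide : IsWide T r ((4 / c) ^ h * t) h)
    (W : Type) [Fintype W] (G : SimpleGraph W) (hG : CTSparse G c t)
    (φ : T →g G) (hφ : IsSkeleton T r G φ)
    (X : Set W) (hX : X ⊆ (Set.range ⇑φ ∪ G.neighborSet (φ r))ᶜ)
    (hXcard : (4 / c) ^ h * t ≤ (X.ncard : ℝ)) :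
    ∃ Y : Set W, Y ⊆ X ∧ (c / 4) ^ h * X.ncard ≤ (Y.ncard : ℝ) ∧
      ∀ v ∈ Y, EpsGood T r G φ (2 * (c / 4) ^ (h + 1)) v := by
  classical
  have hchildren (x : V) (hx : T.dist r x < h) : t ≤ Set.ncard {y : V | IsChild T r x y} :=
    mod_cast (le_four_div_pow_mul hc0 (by linarith) (Nat.cast_nonneg t) h).trans (hwide.2 x hx)
  rw [Set.ncard_eq_toFinset_card'] at hXcard ⊢
  obtain ⟨Y, hYX, hYcard, hYgood⟩ :=
    exists_large_epsGoodAt hc0 (by linarith) ht hG hφ.1 hchildren hwide.dist_le h r (by simp)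
      X.toFinset (by simpa using hX) hXcard
  have hYX' : (Y : Set W) ⊆ X := by simpa using coe_subset.2 hYX
  refine ⟨Y, hYX', by rwa [Set.ncard_coe_finset], fun v hv => ⟨fun hvφ => ?_, hYgood v hv⟩⟩
  exact (hX (hYX' hv)) (Or.inl hvφ)

/-- given `c ∈ (0,1/2)`, integers `h ≥ 0`, `t ≥ 1`, a
`((4/c)^h·t, h)`-wide rooted tree `(T,r)`, a `(c,t)`-sparse graph `G`, a
skeleton `φ` from `(T,r)` to `G` and a set
`X ⊆ V(G) \\ (φ(V(T)) ∪ N_G(φ(r)))` with `|X| ≥ (4/c)^h·t`, there is `Y ⊆ X`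
with `|Y| ≥ (c/4)^h·|X|` all of whose vertices are `2(c/4)^(h+1)`-good
for `φ`. -/
theorem stmt12 (c : ℝ) (hc0 : 0 < c) (hc2 : c < 1 / 2) (h t : ℕ) (ht : 1 ≤ t)
    (V : Type) [Fintype V] (T : SimpleGraph V) (hT : T.IsTree) (r : V)
    (hwide : IsWide T r ((4 / c) ^ h * t) h)
    (W : Type) [Fintype W] (G : SimpleGraph W) (hG : CTSparse G c t)
    (φ : T →g G) (hφ : IsSkeleton T r G φ)
    (X : Set W) (hX : X ⊆ (Set.range ⇑φ ∪ G.neighborSet (φ r))ᶜ)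
    (hXcard : (4 / c) ^ h * t ≤ (X.ncard : ℝ)) :
    ∃ Y : Set W, Y ⊆ X ∧ (c / 4) ^ h * X.ncard ≤ (Y.ncard : ℝ) ∧
      ∀ v ∈ Y, EpsGood T r G φ (2 * (c / 4) ^ (h + 1)) v :=
  stmt12_general c hc0 hc2 h t ht V T r hwide W G hG φ hφ X hX hXcard
end
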